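/- Let F be a finite field with q elements and let k, s, t, ω be integers with 1 ≤ k ≤ s ≤ t and 0 ≤ ω < k. For every function g : F^{t−k} × F^{s−k} → F, the fraction of pairs (A, B) of feature sets with |A| = t, |B| = s, |A ∩ B| = ω (equivalently, the probability for a uniformly random such pair) for which g(rec_k(A), rec_k(B)) ∈ (A ∪ B) ∖ (A ∩ B) is at most 2 · q^{t+s−2k} · C(q, ω) · C(q, k−ω−1) · C(q, k−ω) / (C(q, t+s−ω) · C(t−ω−1, k−ω−1) · C(s−ω, k−ω)). (This is the explicit bound proved for the case ω < k of Theorem 5.) -/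
import Mathlib


open Polynomial Finset

/-- The characteristic polynomial of a finite subset `A` of a field:
`χ_A(X) = ∏_{a ∈ A} (X - a)`. -/
noncomputable def charPoly {F : Type*} [Field F] (A : Finset F) : F[X] :=
  ∏ a ∈ A, (X - C a)

/-- The deterministic vault record of a feature set `A` of size `n` with
parameter `k`: the tuple of coefficients of `X^k, …, X^{n−1}` of `χ_A`. -/
noncomputable def vRec {F : Type*} [Field F] (n k : ℕ) (A : Finset F) :
    Fin (n - k) → F :=
  fun j => (charPoly A).coeff (k + (j : ℕ))

section aux
variable {F : Type*} [Field F]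

lemma charPoly_monic (A : Finset F) : (charPoly A).Monic :=
  monic_prod_of_monic _ _ fun a _ => monic_X_sub_C a

lemma charPoly_natDegree (A : Finset F) : (charPoly A).natDegree = A.card := by
  unfold charPoly
  rw [natDegree_prod _ _ (fun a _ => X_sub_C_ne_zero a)]
  simp

lemma charPoly_eval_eq_zero_iff {A : Finset F} {a : F} :
    (charPoly A).eval a = 0 ↔ a ∈ A := by
  unfold charPoly
  rw [eval_prod, Finset.prod_eq_zero_iff]
  simp [sub_eq_zero, eq_comm]

lemma key_lemma {n k : ℕ} (hkn : k ≤ n) (A₁ A₂ R : Finset F)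
    (h1 : A₁.card = n) (h2 : A₂.card = n)
    (hrec : vRec n k A₁ = vRec n k A₂)
    (hR1 : R ⊆ A₁) (hR2 : R ⊆ A₂) (hR : R.card = k) : A₁ = A₂ := by
  classical
  have hcoeff : ∀ i : ℕ, k ≤ i → (charPoly A₁).coeff i = (charPoly A₂).coeff i := by
    intro i hi
    rcases lt_trichotomy i n with h | h | h
    · have := congrFun hrec ⟨i - k, by omega⟩
      simpa [vRec, Nat.add_sub_cancel' hi] using this
    · subst h
      rw [show i = (charPoly A₁).natDegree from (charPoly_natDegree A₁ ▸ h1.symm)]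
      rw [(charPoly_monic A₁).coeff_natDegree]
      rw [show (charPoly A₁).natDegree = (charPoly A₂).natDegree by
        rw [charPoly_natDegree, charPoly_natDegree, h1, h2]]
      rw [(charPoly_monic A₂).coeff_natDegree]
    · rw [coeff_eq_zero_of_natDegree_lt (by rw [charPoly_natDegree, h1]; exact h),
        coeff_eq_zero_of_natDegree_lt (by rw [charPoly_natDegree, h2]; exact h)]
  have hδ : charPoly A₁ - charPoly A₂ = 0 := by
    by_cases hne : charPoly A₁ - charPoly A₂ = 0
    · exact hne
    refine Polynomial.eq_zero_of_natDegree_lt_card_of_eval_eq_zero' _ R ?_ ?_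
    · intro r hr
      simp [eval_sub, charPoly_eval_eq_zero_iff.2 (hR1 hr),
        charPoly_eval_eq_zero_iff.2 (hR2 hr)]
    · rw [hR]
      have hdeg : (charPoly A₁ - charPoly A₂).degree < (k : ℕ) := by
        rw [degree_lt_iff_coeff_zero]
        intro m hm
        rw [coeff_sub, hcoeff m (by exact_mod_cast hm), sub_self]
      exact natDegree_lt_iff_degree_lt hne |>.2 hdeg
  have hchar : charPoly A₁ = charPoly A₂ := sub_eq_zero.mp hδ
  ext a
  rw [← charPoly_eval_eq_zero_iff, ← charPoly_eval_eq_zero_iff, hchar]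

lemma count_aux {α β : Type*} [DecidableEq β] (E : Finset α) (U : Finset β)
    (w : α → Finset β) (c : ℕ)
    (hsub : ∀ p ∈ E, w p ⊆ U) (hc : ∀ p ∈ E, c ≤ (w p).card)
    (hdisj : ∀ p₁ ∈ E, ∀ p₂ ∈ E, p₁ ≠ p₂ → Disjoint (w p₁) (w p₂)) :
    E.card * c ≤ U.card := by
  calc E.card * c = ∑ _p ∈ E, c := by rw [Finset.sum_const, smul_eq_mul, mul_comm]
  _ ≤ ∑ p ∈ E, (w p).card := Finset.sum_le_sum hc
  _ = (E.biUnion w).card := (Finset.card_biUnion hdisj).symm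
  _ ≤ U.card := Finset.card_le_card (Finset.biUnion_subset.mpr hsub)

lemma choose_swap {a m n : ℕ} (ha : 1 ≤ a) (han : a ≤ n) (hnm : n ≤ m) :
    (m - 1).choose (a - 1) * n.choose a ≤ (n - 1).choose (a - 1) * m.choose a := by
  obtain ⟨A, rfl⟩ : ∃ A, a = A + 1 := ⟨a - 1, by omega⟩
  obtain ⟨N, rfl⟩ : ∃ N, n = N + 1 := ⟨n - 1, by omega⟩
  obtain ⟨M, rfl⟩ : ∃ M, m = M + 1 := ⟨m - 1, by omega⟩
  simp only [Nat.add_sub_cancel]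
  have h1 := Nat.add_one_mul_choose_eq M A
  have h2 := Nat.add_one_mul_choose_eq N A
  have key : ((A+1) * (M+1)) * (M.choose A * (N+1).choose (A+1))
      ≤ ((A+1) * (M+1)) * (N.choose A * (M+1).choose (A+1)) := by
    calc ((A+1) * (M+1)) * (M.choose A * (N+1).choose (A+1))
        = ((M+1) * M.choose A) * ((N+1).choose (A+1) * (A+1)) := by ring
      _ = ((M+1).choose (A+1) * (A+1)) * ((N+1) * N.choose A) := by rw [h1, ← h2]
      _ = (N+1) * ((A+1) * (N.choose A * (M+1).choose (A+1))) := by ring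
      _ ≤ (M+1) * ((A+1) * (N.choose A * (M+1).choose (A+1))) := by
          exact Nat.mul_le_mul_right _ (by omega)
      _ = ((A+1) * (M+1)) * (N.choose A * (M+1).choose (A+1)) := by ring
  exact Nat.le_of_mul_le_mul_left key (by positivity)

lemma count_side {F : Type*} [Field F] [Fintype F] [DecidableEq F]
    (k s t ω : ℕ) (hkt : k ≤ t) (hks : k ≤ s) (hω : ω < k)
    (g : ((Fin (t - k) → F) × (Fin (s - k) → F)) → F) :
    (univ.filter (fun p : Finset F × Finset F =>
        p.1.card = t ∧ p.2.card = s ∧ (p.1 ∩ p.2).card = ω ∧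
        g (vRec t k p.1, vRec s k p.2) ∈ p.1 \ p.2)).card
      * ((t - ω - 1).choose (k - ω - 1) * (s - ω).choose (k - ω))
      ≤ (Fintype.card F)^(t-k) * (Fintype.card F)^(s-k) * (Fintype.card F).choose ω
        * (Fintype.card F).choose (k-ω-1) * (Fintype.card F).choose (k-ω) := by
  classical
  set z : Finset F × Finset F → F := fun p => g (vRec t k p.1, vRec s k p.2) with hz
  set E := univ.filter (fun p : Finset F × Finset F =>
        p.1.card = t ∧ p.2.card = s ∧ (p.1 ∩ p.2).card = ω ∧ z p ∈ p.1 \ p.2) with hE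
  set U := (univ : Finset (Fin (t-k) → F)) ×ˢ ((univ : Finset (Fin (s-k) → F)) ×ˢ
      ((powersetCard ω (univ : Finset F)) ×ˢ ((powersetCard (k-ω-1) (univ : Finset F)) ×ˢ
        (powersetCard (k-ω) (univ : Finset F))))) with hU
  set w : Finset F × Finset F →
      Finset ((Fin (t-k) → F) × ((Fin (s-k) → F) × (Finset F × (Finset F × Finset F)))) :=
    fun p => {vRec t k p.1} ×ˢ ({vRec s k p.2} ×ˢ ({p.1 ∩ p.2} ×ˢ
      ((((p.1 \ p.2).erase (z p)).powersetCard (k-ω-1)) ×ˢ ((p.2 \ p.1).powersetCard (k-ω))))) with hw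
  have main : E.card * ((t - ω - 1).choose (k - ω - 1) * (s - ω).choose (k - ω)) ≤ U.card := by
    apply count_aux E U w
    · -- hsub
      intro p hp x hx
      simp only [hE, Finset.mem_filter] at hp
      obtain ⟨-, hA, hB, hI, hzp⟩ := hp
      simp only [hw, Finset.mem_product, Finset.mem_singleton, Finset.mem_powersetCard] at hx
      obtain ⟨h1, h2, h3, ⟨h4a, h4b⟩, h5a, h5b⟩ := hx
      simp only [hU, Finset.mem_product, Finset.mem_univ, Finset.mem_powersetCard,
        Finset.subset_univ, true_and]
      exact ⟨h3 ▸ hI, h4b, h5b⟩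
    · -- hc
      intro p hp
      simp only [hE, Finset.mem_filter] at hp
      obtain ⟨-, hA, hB, hI, hzp⟩ := hp
      have hAB : (p.1 \ p.2).card = t - ω := by
        have := Finset.card_sdiff_add_card_inter p.1 p.2; omega
      have hBA : (p.2 \ p.1).card = s - ω := by
        have := Finset.card_sdiff_add_card_inter p.2 p.1
        rw [Finset.inter_comm] at this; omega
      have herase : ((p.1 \ p.2).erase (z p)).card = t - ω - 1 := by
        rw [Finset.card_erase_of_mem hzp, hAB]
      apply le_of_eq
      simp only [hw, Finset.card_product, Finset.card_singleton,
        Finset.card_powersetCard, herase, hBA]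
      ring
    · -- hdisj
      intro p₁ hp₁ p₂ hp₂ hne
      rw [Finset.disjoint_left]
      intro x hx1 hx2
      apply hne
      simp only [hE, Finset.mem_filter] at hp₁ hp₂
      obtain ⟨-, hA1, hB1, hI1, hzp1⟩ := hp₁
      obtain ⟨-, hA2, hB2, hI2, hzp2⟩ := hp₂
      obtain ⟨r, r', I, SA, SB⟩ := x
      simp only [hw, Finset.mem_product, Finset.mem_singleton, Finset.mem_powersetCard] at hx1 hx2
      obtain ⟨hr1, hr'1, hI1', ⟨hSA1, hSAc⟩, hSB1, hSBc⟩ := hx1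
      obtain ⟨hr2, hr'2, hI2', ⟨hSA2, -⟩, hSB2, -⟩ := hx2
      have hrecA : vRec t k p₁.1 = vRec t k p₂.1 := by rw [← hr1, ← hr2]
      have hrecB : vRec s k p₁.2 = vRec s k p₂.2 := by rw [← hr'1, ← hr'2]
      have hzz : z p₁ = z p₂ := by
        simp only [hz]; rw [hrecA, hrecB]
      have hz1A : z p₁ ∈ p₁.1 := (Finset.mem_sdiff.mp hzp1).1
      have hz1nB : z p₁ ∉ p₁.2 := (Finset.mem_sdiff.mp hzp1).2
      -- A part
      have hAeq : p₁.1 = p₂.1 := by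
        apply key_lemma hkt p₁.1 p₂.1 (insert (z p₁) (I ∪ SA)) hA1 hA2 hrecA
        · apply Finset.insert_subset hz1A
          apply Finset.union_subset
          · rw [hI1']; exact Finset.inter_subset_left
          · exact (hSA1.trans (Finset.erase_subset _ _)).trans Finset.sdiff_subset
        · rw [hzz]
          apply Finset.insert_subset (Finset.mem_sdiff.mp hzp2).1
          apply Finset.union_subset
          · rw [hI2']; exact Finset.inter_subset_left
          · exact (hSA2.trans (Finset.erase_subset _ _)).trans Finset.sdiff_subset
        · have hdisjIS : Disjoint I SA := by
            rw [Finset.disjoint_left]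
            intro a haI haS
            have haB : a ∈ p₁.2 := by
              rw [hI1'] at haI; exact (Finset.mem_inter.mp haI).2
            have : a ∈ p₁.1 \ p₁.2 := (Finset.erase_subset _ _) (hSA1 haS)
            exact (Finset.mem_sdiff.mp this).2 haB
          have hznotin : z p₁ ∉ I ∪ SA := by
            rw [Finset.mem_union]
            rintro (h | h)
            · rw [hI1'] at h; exact hz1nB (Finset.mem_inter.mp h).2
            · exact Finset.notMem_erase _ _ (hSA1 h)
          rw [Finset.card_insert_of_notMem hznotin, Finset.card_union_of_disjoint hdisjIS]
          have : I.card = ω := by rw [hI1']; exact hI1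
          omega
      -- B part
      have hBeq : p₁.2 = p₂.2 := by
        apply key_lemma hks p₁.2 p₂.2 (I ∪ SB) hB1 hB2 hrecB
        · apply Finset.union_subset
          · rw [hI1']; exact Finset.inter_subset_right
          · exact hSB1.trans Finset.sdiff_subset
        · apply Finset.union_subset
          · rw [hI2']; exact Finset.inter_subset_right
          · exact hSB2.trans Finset.sdiff_subset
        · have hdisjIS : Disjoint I SB := by
            rw [Finset.disjoint_left]
            intro a haI haS
            have haA : a ∈ p₁.1 := by
              rw [hI1'] at haI; exact (Finset.mem_inter.mp haI).1
            exact (Finset.mem_sdiff.mp (hSB1 haS)).2 haA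
          rw [Finset.card_union_of_disjoint hdisjIS]
          have : I.card = ω := by rw [hI1']; exact hI1
          omega
      exact Prod.ext hAeq hBeq
  calc (univ.filter (fun p : Finset F × Finset F =>
        p.1.card = t ∧ p.2.card = s ∧ (p.1 ∩ p.2).card = ω ∧
        g (vRec t k p.1, vRec s k p.2) ∈ p.1 \ p.2)).card
      * ((t - ω - 1).choose (k - ω - 1) * (s - ω).choose (k - ω)) = E.card * _ := rfl
    _ ≤ U.card := main
    _ = (Fintype.card F)^(t-k) * (Fintype.card F)^(s-k) * (Fintype.card F).choose ω
        * (Fintype.card F).choose (k-ω-1) * (Fintype.card F).choose (k-ω) := by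
      simp only [hU, Finset.card_product, Finset.card_univ, Finset.card_powersetCard,
        Fintype.card_fun, Fintype.card_fin]
      ring
end aux

lemma T_lower {F : Type*} [Field F] [Fintype F] [DecidableEq F]
    (s t ω : ℕ) (hωs : ω ≤ s) (hst : s ≤ t) :
    (Fintype.card F).choose (t + s - ω) ≤
      (univ.filter (fun p : Finset F × Finset F =>
        p.1.card = t ∧ p.2.card = s ∧ (p.1 ∩ p.2).card = ω)).card := by
  classical
  set Tfin := univ.filter (fun p : Finset F × Finset F =>
        p.1.card = t ∧ p.2.card = s ∧ (p.1 ∩ p.2).card = ω) with hTfin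
  set pc := powersetCard (t + s - ω) (univ : Finset F) with hpc
  have hex : ∀ U ∈ pc, ∃ p, p ∈ Tfin ∧ p.1 ∪ p.2 = U := by
    intro U hU
    rw [hpc, Finset.mem_powersetCard] at hU
    obtain ⟨-, hUcard⟩ := hU
    obtain ⟨A, hAU, hA⟩ := Finset.exists_subset_card_eq (show t ≤ U.card by omega)
    obtain ⟨I, hIA, hIcard⟩ := Finset.exists_subset_card_eq (show ω ≤ A.card by omega)
    have hdisj : Disjoint (U \ A) I :=
      (Finset.sdiff_disjoint).mono_right hIA
    have hInter : A ∩ ((U \ A) ∪ I) = I := by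
      ext x
      simp only [Finset.mem_inter, Finset.mem_union, Finset.mem_sdiff]
      constructor
      · rintro ⟨hxA, hx | hxI⟩
        · exact absurd hxA hx.2
        · exact hxI
      · intro hxI
        exact ⟨hIA hxI, Or.inr hxI⟩
    refine ⟨(A, (U \ A) ∪ I), ?_, ?_⟩
    · rw [hTfin, Finset.mem_filter]
      refine ⟨Finset.mem_univ _, hA, ?_, ?_⟩
      · rw [Finset.card_union_of_disjoint hdisj, Finset.card_sdiff_of_subset hAU]
        omega
      · rw [hInter]; exact hIcard
    · show A ∪ ((U \ A) ∪ I) = U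
      rw [← Finset.union_assoc, Finset.union_sdiff_of_subset hAU]
      exact Finset.union_eq_left.mpr (hIA.trans hAU)
  choose f hf1 hf2 using hex
  have : pc.card ≤ Tfin.card := by
    rw [← Finset.card_attach (s := pc)]
    apply Finset.card_le_card_of_injOn (fun u => f u.1 u.2)
    · exact fun u _ => hf1 u.1 u.2
    · intro u _ v _ h
      apply Subtype.ext
      simp only at h
      rw [← hf2 u.1 u.2, ← hf2 v.1 v.2, h]
  calc (Fintype.card F).choose (t + s - ω) = pc.card := by
        rw [hpc, Finset.card_powersetCard, Finset.card_univ]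
    _ ≤ Tfin.card := this


set_option maxHeartbeats 1600000 in
/-- The case `ω < k` of Theorem 5: the probability (over uniformly random pairs
of feature sets of sizes `t`, `s` overlapping in `ω < k` elements) that `g`
extracts an element of `(A ∪ B) ∖ (A ∩ B)` from the two deterministic vault
records is at most
`2·q^{t+s−2k}·C(q,ω)·C(q,k−ω−1)·C(q,k−ω) /
  (C(q,t+s−ω)·C(t−ω−1,k−ω−1)·C(s−ω,k−ω))`. -/
theorem stmt13 {F : Type*} [Field F] [Fintype F] [DecidableEq F]
    (k s t ω : ℕ) (hk : 1 ≤ k) (hks : k ≤ s) (hst : s ≤ t) (hω : ω < k)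
    (g : ((Fin (t - k) → F) × (Fin (s - k) → F)) → F) :
    (Set.ncard { p : Finset F × Finset F |
        p.1.card = t ∧ p.2.card = s ∧ (p.1 ∩ p.2).card = ω ∧
        g (vRec t k p.1, vRec s k p.2) ∈ (p.1 ∪ p.2) \ (p.1 ∩ p.2) } : ℚ)
      / (Set.ncard { p : Finset F × Finset F |
          p.1.card = t ∧ p.2.card = s ∧ (p.1 ∩ p.2).card = ω } : ℚ)
      ≤ ((2 * (Fintype.card F) ^ (t + s - 2 * k)
            * (Fintype.card F).choose ω
            * (Fintype.card F).choose (k - ω - 1)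
            * (Fintype.card F).choose (k - ω) : ℕ) : ℚ)
        / (((Fintype.card F).choose (t + s - ω)
            * (t - ω - 1).choose (k - ω - 1)
            * (s - ω).choose (k - ω) : ℕ) : ℚ) := by
  classical
  have hkt : k ≤ t := hks.trans hst
  set q := Fintype.card F with hq
  set Efin := univ.filter (fun p : Finset F × Finset F =>
      p.1.card = t ∧ p.2.card = s ∧ (p.1 ∩ p.2).card = ω ∧
      g (vRec t k p.1, vRec s k p.2) ∈ (p.1 ∪ p.2) \ (p.1 ∩ p.2)) with hEfin
  set Tfin := univ.filter (fun p : Finset F × Finset F =>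
      p.1.card = t ∧ p.2.card = s ∧ (p.1 ∩ p.2).card = ω) with hTfin
  have hNE : Set.ncard { p : Finset F × Finset F |
      p.1.card = t ∧ p.2.card = s ∧ (p.1 ∩ p.2).card = ω ∧
      g (vRec t k p.1, vRec s k p.2) ∈ (p.1 ∪ p.2) \ (p.1 ∩ p.2) } = Efin.card := by
    rw [← Set.ncard_coe_finset]
    congr 1
    ext p
    simp [hEfin]
  have hNT : Set.ncard { p : Finset F × Finset F |
      p.1.card = t ∧ p.2.card = s ∧ (p.1 ∩ p.2).card = ω } = Tfin.card := by
    rw [← Set.ncard_coe_finset]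
    congr 1
    ext p
    simp [hTfin]
  rw [hNE, hNT]
  by_cases hT0 : Tfin.card = 0
  · rw [hT0, Nat.cast_zero, div_zero]
    exact div_nonneg (Nat.cast_nonneg _) (Nat.cast_nonneg _)
  -- T nonempty
  obtain ⟨p0, hp0⟩ := Finset.card_pos.mp (Nat.pos_of_ne_zero hT0)
  rw [hTfin, Finset.mem_filter] at hp0
  obtain ⟨-, hA0, hB0, hI0⟩ := hp0
  have hle : t + s - ω ≤ q := by
    have h1 := Finset.card_union_add_card_inter p0.1 p0.2
    have h2 : (p0.1 ∪ p0.2).card ≤ q := by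
      rw [hq, ← Finset.card_univ]; exact Finset.card_le_card (Finset.subset_univ _)
    omega
  have hωs : ω ≤ s := (Nat.le_of_lt hω).trans hks |>.trans (le_refl s) |>.trans (le_refl s)
  -- split E into two parts
  set E1 := univ.filter (fun p : Finset F × Finset F =>
      p.1.card = t ∧ p.2.card = s ∧ (p.1 ∩ p.2).card = ω ∧
      g (vRec t k p.1, vRec s k p.2) ∈ p.1 \ p.2) with hE1
  set E2 := univ.filter (fun p : Finset F × Finset F =>
      p.1.card = t ∧ p.2.card = s ∧ (p.1 ∩ p.2).card = ω ∧
      g (vRec t k p.1, vRec s k p.2) ∈ p.2 \ p.1) with hE2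
  have hsplit : Efin.card ≤ E1.card + E2.card := by
    refine le_trans (Finset.card_le_card ?_) (Finset.card_union_le E1 E2)
    intro p hp
    rw [hEfin, Finset.mem_filter] at hp
    obtain ⟨hu, h1, h2, h3, h4⟩ := hp
    rw [Finset.mem_union, hE1, hE2, Finset.mem_filter, Finset.mem_filter]
    rw [Finset.mem_sdiff, Finset.mem_union, Finset.mem_inter] at h4
    obtain ⟨hz1 | hz2, hzn⟩ := h4
    · left
      exact ⟨hu, h1, h2, h3, Finset.mem_sdiff.mpr ⟨hz1, fun hb => hzn ⟨hz1, hb⟩⟩⟩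
    · right
      exact ⟨hu, h1, h2, h3, Finset.mem_sdiff.mpr ⟨hz2, fun ha => hzn ⟨ha, hz2⟩⟩⟩
  set c1 := (t - ω - 1).choose (k - ω - 1) with hc1
  set c2 := (s - ω).choose (k - ω) with hc2
  set M := q^(t-k) * q^(s-k) * q.choose ω * q.choose (k-ω-1) * q.choose (k-ω) with hM
  have hE1bound : E1.card * (c1 * c2) ≤ M := count_side k s t ω hkt hks hω g
  -- E2 via swapping
  have hE2card : E2.card = (univ.filter (fun p : Finset F × Finset F =>
      p.1.card = s ∧ p.2.card = t ∧ (p.1 ∩ p.2).card = ω ∧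
      (fun u : (Fin (s - k) → F) × (Fin (t - k) → F) => g (u.2, u.1))
        (vRec s k p.1, vRec t k p.2) ∈ p.1 \ p.2)).card := by
    refine Finset.card_bij' (fun p _ => (p.2, p.1)) (fun p _ => (p.2, p.1)) ?_ ?_ ?_ ?_
    · intro p hp
      rw [hE2, Finset.mem_filter] at hp
      obtain ⟨-, h1, h2, h3, h4⟩ := hp
      simp only [Finset.mem_filter, Finset.mem_univ, true_and]
      refine ⟨h2, h1, by rwa [Finset.inter_comm], h4⟩
    · intro p hp
      rw [Finset.mem_filter] at hp
      obtain ⟨-, h1, h2, h3, h4⟩ := hp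
      rw [hE2, Finset.mem_filter]
      exact ⟨Finset.mem_univ _, h2, h1, by rwa [Finset.inter_comm], h4⟩
    · intro p _; rfl
    · intro p _; rfl
  have hE2bound : E2.card * ((s-ω-1).choose (k-ω-1) * (t-ω).choose (k-ω)) ≤ M := by
    rw [hE2card]
    calc _ ≤ q^(s-k) * q^(t-k) * q.choose ω * q.choose (k-ω-1) * q.choose (k-ω) :=
          count_side k t s ω hks hkt hω (fun u : (Fin (s - k) → F) × (Fin (t - k) → F) => g (u.2, u.1))
      _ = M := by rw [hM]; ring
  have hcomp : c1 * c2 ≤ (s-ω-1).choose (k-ω-1) * (t-ω).choose (k-ω) :=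
    choose_swap (a := k-ω) (n := s-ω) (m := t-ω) (by omega) (by omega) (by omega)
  have hEbound : Efin.card * (c1 * c2) ≤ 2 * M := by
    calc Efin.card * (c1 * c2) ≤ (E1.card + E2.card) * (c1 * c2) :=
          Nat.mul_le_mul_right _ hsplit
      _ = E1.card * (c1 * c2) + E2.card * (c1 * c2) := by ring
      _ ≤ M + E2.card * ((s-ω-1).choose (k-ω-1) * (t-ω).choose (k-ω)) :=
          Nat.add_le_add hE1bound (Nat.mul_le_mul_left _ hcomp)
      _ ≤ M + M := Nat.add_le_add_left hE2bound _
      _ = 2 * M := by ring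
  have hTlow : q.choose (t+s-ω) ≤ Tfin.card := T_lower s t ω hωs hst
  have hc3pos : 0 < q.choose (t+s-ω) := Nat.choose_pos hle
  have hc1pos : 0 < c1 := Nat.choose_pos (by omega)
  have hc2pos : 0 < c2 := Nat.choose_pos (by omega)
  have hTpos : (0 : ℚ) < Tfin.card := by
    exact_mod_cast Nat.pos_of_ne_zero hT0
  have hDpos : (0 : ℚ) < ((q.choose (t + s - ω) * c1 * c2 : ℕ) : ℚ) := by
    have : 0 < q.choose (t + s - ω) * c1 * c2 := by positivity
    exact_mod_cast this
  rw [div_le_div_iff₀ hTpos hDpos]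
  have hnat : Efin.card * (q.choose (t + s - ω) * c1 * c2) ≤
      (2 * q ^ (t + s - 2 * k) * q.choose ω * q.choose (k - ω - 1) * q.choose (k - ω))
        * Tfin.card := by
    have h2M : 2 * q ^ (t + s - 2 * k) * q.choose ω * q.choose (k - ω - 1)
        * q.choose (k - ω) = 2 * M := by
      rw [hM, show t + s - 2*k = (t-k) + (s-k) by omega, pow_add]; ring
    calc Efin.card * (q.choose (t + s - ω) * c1 * c2)
        = (Efin.card * (c1 * c2)) * q.choose (t + s - ω) := by ring
      _ ≤ (2 * M) * q.choose (t + s - ω) := Nat.mul_le_mul_right _ hEbound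
      _ ≤ (2 * M) * Tfin.card := Nat.mul_le_mul_left _ hTlow
      _ = _ := by rw [h2M]
  exact_mod_cast hnat
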